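/- arXiv:1905.04057 — 5 statements merged into one kernel-verified Lean document; each statement's English description precedes it below -/
import Mathlib

section
/- Let 0 < R ≤ 1, M ≥ 0, σ > 0, and let ρ and ρ_r be even 2-periodic probability densities (integrable on [-1,1]). Then the function T ρ defined by (T ρ)(x) = K⁻¹ exp( −(2/σ²) ∫₀^x G_ρ(z) dz ), with K = ∫₀¹ exp( −(2/σ²) ∫₀^x G_ρ(z) dz ) dx, satisfies 0 < (T ρ)(x) ≤ exp( 8R(1+M)/σ² ) for every x ∈ [0,1]. -/
open MeasureTheory Real intervalIntegral

/-- The influence field `G_ρ(x) = ∫_{x-R}^{x+R} (x-y)(ρ(y) + M ρ_r(y)) dy`. -/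
noncomputable def G (R M : ℝ) (ρ ρr : ℝ → ℝ) (x : ℝ) : ℝ :=
  ∫ y in (x - R)..(x + R), (x - y) * (ρ y + M * ρr y)

/-- `f` is an even 2-periodic probability density. -/
def IsEvenPeriodicDensity (f : ℝ → ℝ) : Prop :=
  (∀ x, f (x + 2) = f x) ∧ (∀ x, f (-x) = f x) ∧ (∀ x, 0 ≤ f x) ∧
    (∫ x in (0:ℝ)..1, f x) = 1

/-- The operator `T`: `(T ρ)(x) = K⁻¹ exp(−(2/σ²) ∫₀ˣ G_ρ(z) dz)` with normalizing
constant `K = ∫₀¹ exp(−(2/σ²) ∫₀ˣ G_ρ(z) dz) dx`. -/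
noncomputable def Tmap (R M σ : ℝ) (ρr ρ : ℝ → ℝ) (x : ℝ) : ℝ :=
  Real.exp (-(2 / σ ^ 2) * ∫ z in (0:ℝ)..x, G R M ρ ρr z) /
    ∫ y in (0:ℝ)..1, Real.exp (-(2 / σ ^ 2) * ∫ z in (0:ℝ)..y, G R M ρ ρr z)



lemma periodic_intervalIntegrable' {f : ℝ → ℝ} (hper : Function.Periodic f 2)
    (hint : IntervalIntegrable f volume (-1) 1) (a b : ℝ) :
    IntervalIntegrable f volume a b := by
  have hshift : ∀ n : ℤ, IntervalIntegrable f volume (-1 + n * 2) (1 + n * 2) := by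
    intro n
    have h := hint.comp_sub_right ((n : ℝ) * 2)
    have he : (fun x => f (x - (n : ℝ) * 2)) = f := funext fun x => (hper.int_mul n).sub_eq x
    rwa [he] at h
  have hchain : ∀ n : ℕ, IntervalIntegrable f volume (-1 - n * 2) (1 + n * 2) := by
    intro n
    induction n with
    | zero => simpa using hint
    | succ k ih =>
      have hl := hshift (-(k + 1))
      have hr := hshift (k + 1)
      have e1 : (-1 : ℝ) + ((-(k + 1) : ℤ) : ℝ) * 2 = -1 - (k + 1 : ℕ) * 2 := by push_cast; ring
      have e2 : (1 : ℝ) + ((-(k + 1) : ℤ) : ℝ) * 2 = -1 - (k : ℕ) * 2 := by push_cast; ring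
      have e3 : (-1 : ℝ) + (((k + 1) : ℤ) : ℝ) * 2 = 1 + (k : ℕ) * 2 := by push_cast; ring
      have e4 : (1 : ℝ) + (((k + 1) : ℤ) : ℝ) * 2 = 1 + ((k + 1 : ℕ) : ℝ) * 2 := by push_cast; ring
      rw [e1, e2] at hl
      rw [e3, e4] at hr
      exact (hl.trans ih).trans hr
  obtain ⟨n, hn⟩ := exists_nat_ge (max |a| |b|)
  refine (hchain n).mono_set ?_
  have hab : ∀ x ∈ ({a, b} : Set ℝ), x ∈ Set.uIcc (-1 - (n : ℝ) * 2) (1 + (n : ℝ) * 2) := by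
    intro x hx
    have hx' : |x| ≤ n := by
      rcases hx with rfl | rfl
      · exact (le_max_left _ _).trans hn
      · exact (le_max_right _ _).trans hn
    rw [Set.uIcc_of_le (by nlinarith [abs_nonneg x])]
    constructor
    · nlinarith [neg_abs_le x]
    · nlinarith [le_abs_self x]
  exact Set.uIcc_subset_uIcc (hab a (by simp)) (hab b (by simp))

theorem stmt_9 (R M σ : ℝ) (hR : 0 < R) (hR1 : R ≤ 1) (hM : 0 ≤ M) (hσ : 0 < σ)
    (ρ ρr : ℝ → ℝ) (hρ : IsEvenPeriodicDensity ρ) (hρr : IsEvenPeriodicDensity ρr)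
    (hρint : IntervalIntegrable ρ volume (-1) 1)
    (hρrint : IntervalIntegrable ρr volume (-1) 1) :
    ∀ x ∈ Set.Icc (0:ℝ) 1,
      0 < Tmap R M σ ρr ρ x ∧
        Tmap R M σ ρr ρ x ≤ Real.exp (8 * R * (1 + M) / σ ^ 2) := by
  obtain ⟨hρper, hρeven, hρpos, hρone⟩ := hρ
  obtain ⟨hρrper, hρreven, hρrpos, hρrone⟩ := hρr
  set h : ℝ → ℝ := fun y => ρ y + M * ρr y with hh
  have hσ2 : (0:ℝ) < σ ^ 2 := by positivity
  -- h nonneg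
  have hh0 : ∀ y, 0 ≤ h y := fun y => add_nonneg (hρpos y) (mul_nonneg hM (hρrpos y))
  -- integrability of h everywhere
  have hρall : ∀ a b, IntervalIntegrable ρ volume a b :=
    periodic_intervalIntegrable' hρper hρint
  have hρrall : ∀ a b, IntervalIntegrable ρr volume a b :=
    periodic_intervalIntegrable' hρrper hρrint
  have hIntAll : ∀ a b, IntervalIntegrable h volume a b := fun a b =>
    (hρall a b).add ((hρrall a b).const_mul M)
  have hhper : Function.Periodic h 2 := fun x => by simp [hh, hρper x, hρrper x]
  -- ∫_{-1}^{1} h = 2 (1+M)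
  have hρneg : (∫ x in (-1:ℝ)..0, ρ x) = 1 := by
    have := intervalIntegral.integral_comp_neg (a := (0:ℝ)) (b := 1) ρ
    simp only [neg_zero] at this
    rw [← this]
    simp_rw [hρeven]
    exact hρone
  have hρrneg : (∫ x in (-1:ℝ)..0, ρr x) = 1 := by
    have := intervalIntegral.integral_comp_neg (a := (0:ℝ)) (b := 1) ρr
    simp only [neg_zero] at this
    rw [← this]
    simp_rw [hρreven]
    exact hρrone
  have hρ2 : (∫ x in (-1:ℝ)..1, ρ x) = 2 := by
    rw [← intervalIntegral.integral_add_adjacent_intervals (hρall (-1) 0) (hρall 0 1),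
      hρneg, hρone]; norm_num
  have hρr2 : (∫ x in (-1:ℝ)..1, ρr x) = 2 := by
    rw [← intervalIntegral.integral_add_adjacent_intervals (hρrall (-1) 0) (hρrall 0 1),
      hρrneg, hρrone]; norm_num
  have hint2 : (∫ x in (-1:ℝ)..1, h x) = 2 * (1 + M) := by
    rw [hh]
    rw [intervalIntegral.integral_add (hρall (-1) 1) ((hρrall (-1) 1).const_mul M),
      intervalIntegral.integral_const_mul, hρ2, hρr2]
    ring
  -- ∫ over any window of length 2R is ≤ 2(1+M)
  have hwin : ∀ z : ℝ, (∫ y in (z - R)..(z + R), h y) ≤ 2 * (1 + M) := by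
    intro z
    have h1 : (∫ y in (z - R)..(z + R), h y) ≤ ∫ y in (z - 1)..(z + 1), h y := by
      apply intervalIntegral.integral_mono_interval (by linarith) (by linarith) (by linarith)
      · exact Filter.Eventually.of_forall fun y => hh0 y
      · exact hIntAll _ _
    have h2 : (∫ y in (z - 1)..(z + 1), h y) = ∫ y in (-1:ℝ)..1, h y := by
      have := hhper.intervalIntegral_add_eq (z - 1) (-1)
      norm_num at this
      convert this using 2 <;> ring
    linarith [hint2 ▸ h2 ▸ h1]
  -- bound on G
  have hGb : ∀ z : ℝ, |G R M ρ ρr z| ≤ 2 * R * (1 + M) := by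
    intro z
    have hb : ∀ᵐ t ∂(volume.restrict (Set.uIoc (z - R) (z + R))),
        ‖(z - t) * h t‖ ≤ R * h t := by
      refine (ae_restrict_iff' measurableSet_uIoc).mpr (Filter.Eventually.of_forall ?_)
      intro t ht
      rw [Set.uIoc_of_le (by linarith)] at ht
      rw [norm_mul, Real.norm_eq_abs, Real.norm_eq_abs, abs_of_nonneg (hh0 t)]
      have : |z - t| ≤ R := by
        rw [abs_le]; constructor <;> [linarith [ht.2]; linarith [ht.1]]
      exact mul_le_mul_of_nonneg_right this (hh0 t)
    have key := intervalIntegral.norm_integral_le_abs_of_norm_le (μ := volume)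
      (a := z - R) (b := z + R) (f := fun t => (z - t) * h t) hb
      ((hIntAll _ _).const_mul R)
    rw [Real.norm_eq_abs] at key
    refine (key.trans ?_)
    rw [intervalIntegral.integral_const_mul]
    rw [abs_of_nonneg (mul_nonneg hR.le (intervalIntegral.integral_nonneg (by linarith)
      (fun y _ => hh0 y)))]
    calc R * ∫ y in (z - R)..(z + R), h y ≤ R * (2 * (1 + M)) :=
          mul_le_mul_of_nonneg_left (hwin z) hR.le
      _ = 2 * R * (1 + M) := by ring
  -- continuity of window integrals
  have hcontWin : ∀ (f : ℝ → ℝ), (∀ a b, IntervalIntegrable f volume a b) →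
      Continuous (fun z => ∫ y in (z - R)..(z + R), f y) := by
    intro f hf
    have he : (fun z => ∫ y in (z - R)..(z + R), f y) =
        fun z => (∫ y in (0:ℝ)..(z + R), f y) - ∫ y in (0:ℝ)..(z - R), f y := by
      funext z
      rw [intervalIntegral.integral_interval_sub_left (hf 0 (z + R)) (hf 0 (z - R))]
    rw [he]
    exact ((intervalIntegral.continuous_primitive hf 0).comp (by continuity)).sub
      ((intervalIntegral.continuous_primitive hf 0).comp (by continuity))
  -- G is continuous
  have hmul : ∀ a b, IntervalIntegrable (fun y => y * h y) volume a b := fun a b =>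
    (hIntAll a b).continuousOn_mul continuousOn_id
  have hGdecomp : (fun z => G R M ρ ρr z) =
      fun z => z * (∫ y in (z - R)..(z + R), h y) - ∫ y in (z - R)..(z + R), y * h y := by
    funext z
    rw [G, ← intervalIntegral.integral_const_mul,
      ← intervalIntegral.integral_sub ((hIntAll _ _).const_mul z) (hmul _ _)]
    congr 1; funext y; ring
  have hGcont : Continuous (G R M ρ ρr) := by
    rw [show G R M ρ ρr = fun z => G R M ρ ρr z from rfl, hGdecomp]
    exact (continuous_id.mul (hcontWin h hIntAll)).sub (hcontWin _ hmul)
  -- the primitive of G and its bound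
  have hGint : ∀ a b, IntervalIntegrable (G R M ρ ρr) volume a b := fun a b =>
    (hGcont.intervalIntegrable a b)
  set B : ℝ := 2 / σ ^ 2 * (2 * R * (1 + M)) with hB
  have hBpos : 0 ≤ B := by positivity
  have hPb : ∀ x ∈ Set.Icc (0:ℝ) 1, |∫ z in (0:ℝ)..x, G R M ρ ρr z| ≤ 2 * R * (1 + M) := by
    intro x hx
    have key := intervalIntegral.norm_integral_le_of_norm_le_const (a := (0:ℝ)) (b := x)
      (C := 2 * R * (1 + M)) (f := G R M ρ ρr) (fun z _ => by
        rw [Real.norm_eq_abs]; exact hGb z)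
    rw [Real.norm_eq_abs] at key
    refine key.trans ?_
    rw [sub_zero, abs_of_nonneg hx.1]
    have := mul_le_mul_of_nonneg_left hx.2 (show (0:ℝ) ≤ 2 * R * (1 + M) by positivity)
    linarith
  have hexpb : ∀ x ∈ Set.Icc (0:ℝ) 1,
      Real.exp (-B) ≤ Real.exp (-(2 / σ ^ 2) * ∫ z in (0:ℝ)..x, G R M ρ ρr z) ∧
      Real.exp (-(2 / σ ^ 2) * ∫ z in (0:ℝ)..x, G R M ρ ρr z) ≤ Real.exp B := by
    intro x hx
    have h1 := hPb x hx
    have hc : (0:ℝ) < 2 / σ ^ 2 := by positivity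
    have h2 : |(-(2 / σ ^ 2)) * ∫ z in (0:ℝ)..x, G R M ρ ρr z| ≤ B := by
      rw [abs_mul, abs_neg, abs_of_nonneg hc.le, hB]
      exact mul_le_mul_of_nonneg_left h1 hc.le
    rw [abs_le] at h2
    exact ⟨Real.exp_le_exp.mpr h2.1, Real.exp_le_exp.mpr h2.2⟩
  -- K bounds
  set K : ℝ := ∫ y in (0:ℝ)..1, Real.exp (-(2 / σ ^ 2) * ∫ z in (0:ℝ)..y, G R M ρ ρr z) with hK
  have hFcont : Continuous (fun y => Real.exp (-(2 / σ ^ 2) * ∫ z in (0:ℝ)..y, G R M ρ ρr z)) :=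
    (continuous_const.mul (intervalIntegral.continuous_primitive hGint 0)).rexp
  have hKge : Real.exp (-B) ≤ K := by
    have := intervalIntegral.integral_mono_on (a := (0:ℝ)) (b := 1)
      (f := fun _ => Real.exp (-B))
      (g := fun y => Real.exp (-(2 / σ ^ 2) * ∫ z in (0:ℝ)..y, G R M ρ ρr z))
      (by norm_num) (intervalIntegrable_const (μ := volume)) (hFcont.intervalIntegrable 0 1)
      (fun x hx => (hexpb x hx).1)
    simpa [hK, neg_mul] using this
  have hKpos : 0 < K := lt_of_lt_of_le (Real.exp_pos _) hKge
  intro x hx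
  have hnum : 0 < Real.exp (-(2 / σ ^ 2) * ∫ z in (0:ℝ)..x, G R M ρ ρr z) := Real.exp_pos _
  constructor
  · exact div_pos hnum hKpos
  · have hle : Tmap R M σ ρr ρ x ≤ Real.exp B / Real.exp (-B) := by
      rw [Tmap, ← hK]
      exact div_le_div₀ (Real.exp_pos B).le (hexpb x hx).2 (Real.exp_pos _) hKge
    refine hle.trans_eq ?_
    rw [← Real.exp_sub]
    congr 1
    rw [hB]
    field_simp
    ring
end

section
/- Let 0 < R ≤ 1, M ≥ 0, σ > 0, and let ρ and ρ_r be continuous even 2-periodic probability densities. Then T ρ is continuously differentiable on (0,1) with (T ρ)'(x) = −(2/σ²) G_ρ(x) (T ρ)(x), and |(T ρ)'(x)| ≤ (4R(1+M)/σ²) · exp( 8R(1+M)/σ² ) for every x ∈ (0,1). -/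
open MeasureTheory Real

theorem stmt_10 (R M σ : ℝ) (hR : 0 < R) (hR1 : R ≤ 1) (hM : 0 ≤ M) (hσ : 0 < σ)
    (ρ ρr : ℝ → ℝ) (hρc : Continuous ρ) (hρrc : Continuous ρr)
    (hρ : IsEvenPeriodicDensity ρ) (hρr : IsEvenPeriodicDensity ρr) :
    (∀ x ∈ Set.Ioo (0:ℝ) 1,
      HasDerivAt (Tmap R M σ ρr ρ)
        (-(2 / σ ^ 2) * G R M ρ ρr x * Tmap R M σ ρr ρ x) x) ∧
    ContinuousOn (deriv (Tmap R M σ ρr ρ)) (Set.Ioo (0:ℝ) 1) ∧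
    ∀ x ∈ Set.Ioo (0:ℝ) 1,
      |deriv (Tmap R M σ ρr ρ) x|
        ≤ (4 * R * (1 + M) / σ ^ 2) * Real.exp (8 * R * (1 + M) / σ ^ 2) := by

  obtain ⟨hρp, hρe, hρ0, hρ1⟩ := hρ
  obtain ⟨hρrp, hρre, hρr0, hρr1⟩ := hρr
  set h : ℝ → ℝ := fun y => ρ y + M * ρr y with hhdef
  have hhc : Continuous h := hρc.add (continuous_const.mul hρrc)
  have hh0 : ∀ y, 0 ≤ h y := fun y => add_nonneg (hρ0 y) (mul_nonneg hM (hρr0 y))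
  have hhper : Function.Periodic h 2 := fun y => by simp [hhdef, hρp, hρrp]
  have hhe : ∀ y, h (-y) = h y := fun y => by simp [hhdef, hρe, hρre]
  -- total mass over one period
  have hint1 : (∫ y in (0:ℝ)..1, h y) = 1 + M := by
    rw [show h = fun y => ρ y + M * ρr y from rfl]
    rw [intervalIntegral.integral_add (hρc.intervalIntegrable _ _)
      (Continuous.intervalIntegrable (u := fun y => M * ρr y) (continuous_const.mul hρrc) _ _),
      intervalIntegral.integral_const_mul, hρ1, hρr1]
    ring
  have hintneg : (∫ y in (-1:ℝ)..0, h y) = 1 + M := by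
    have := intervalIntegral.integral_comp_neg (a := (0:ℝ)) (b := 1) h
    simp only [neg_zero] at this
    rw [← this]
    simp only [hhe]
    exact hint1
  have hint2 : ∀ a : ℝ, (∫ y in a..(a + 2), h y) = 2 * (1 + M) := by
    intro a
    rw [hhper.intervalIntegral_add_eq a (-1), show ((-1:ℝ) + 2) = 1 by norm_num]
    rw [← intervalIntegral.integral_add_adjacent_intervals (a := (-1:ℝ)) (b := 0)
      (c := 1) (hhc.intervalIntegrable _ _) (hhc.intervalIntegrable _ _)]
    rw [hint1, hintneg]
    ring
  set B : ℝ := 2 * R * (1 + M) with hBdef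
  have hB0 : 0 ≤ B := by positivity
  -- bound on G
  have hGb : ∀ x : ℝ, |G R M ρ ρr x| ≤ B := by
    intro x
    have hab : x - R ≤ x + R := by linarith
    have h1 : |G R M ρ ρr x| ≤ ∫ y in (x - R)..(x + R), |(x - y) * h y| := by
      exact intervalIntegral.abs_integral_le_integral_abs hab
    have h2 : (∫ y in (x - R)..(x + R), |(x - y) * h y|)
        ≤ ∫ y in (x - R)..(x + R), R * h y := by
      apply intervalIntegral.integral_mono_on hab
        (Continuous.intervalIntegrable (u := fun y => |(x - y) * h y|)
          ((continuous_const.sub continuous_id').mul hhc).abs _ _)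
        (Continuous.intervalIntegrable (u := fun y => R * h y) (continuous_const.mul hhc) _ _)
      intro y hy
      rw [abs_mul, abs_of_nonneg (hh0 y)]
      apply mul_le_mul_of_nonneg_right _ (hh0 y)
      rw [abs_le]
      constructor <;> [linarith [hy.2]; linarith [hy.1]]
    have h3 : (∫ y in (x - R)..(x + R), R * h y) = R * ∫ y in (x - R)..(x + R), h y := by
      exact intervalIntegral.integral_const_mul _ _
    have h4 : (∫ y in (x - R)..(x + R), h y) ≤ 2 * (1 + M) := by
      rw [← hint2 (x - R)]
      rw [← intervalIntegral.integral_add_adjacent_intervals (a := x - R) (b := x + R)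
        (c := x - R + 2) (hhc.intervalIntegrable _ _) (hhc.intervalIntegrable _ _)]
      have h5 : 0 ≤ ∫ y in (x + R)..(x - R + 2), h y := by
        apply intervalIntegral.integral_nonneg (by linarith) (fun u _ => hh0 u)
      linarith
    calc |G R M ρ ρr x| ≤ ∫ y in (x - R)..(x + R), R * h y := h1.trans h2
      _ = R * ∫ y in (x - R)..(x + R), h y := h3
      _ ≤ R * (2 * (1 + M)) := by
          exact mul_le_mul_of_nonneg_left h4 hR.le
      _ = B := by rw [hBdef]; ring
  -- continuity of G
  have hprim : ∀ g : ℝ → ℝ, Continuous g → Continuous fun t => ∫ y in (0:ℝ)..t, g y :=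
    fun g hg => intervalIntegral.continuous_primitive (fun a b => hg.intervalIntegrable a b) 0
  have hGc : Continuous (G R M ρ ρr) := by
    have hGeq : ∀ x : ℝ, G R M ρ ρr x =
        x * ((∫ y in (0:ℝ)..(x + R), h y) - ∫ y in (0:ℝ)..(x - R), h y)
        - ((∫ y in (0:ℝ)..(x + R), y * h y) - ∫ y in (0:ℝ)..(x - R), y * h y) := by
      intro x
      have e1 : (∫ y in (x - R)..(x + R), h y)
          = (∫ y in (0:ℝ)..(x + R), h y) - ∫ y in (0:ℝ)..(x - R), h y := by
        rw [← intervalIntegral.integral_add_adjacent_intervals (a := (0:ℝ)) (b := x - R)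
          (c := x + R) (hhc.intervalIntegrable _ _) (hhc.intervalIntegrable _ _)]
        ring
      have e2 : (∫ y in (x - R)..(x + R), y * h y)
          = (∫ y in (0:ℝ)..(x + R), y * h y) - ∫ y in (0:ℝ)..(x - R), y * h y := by
        rw [← intervalIntegral.integral_add_adjacent_intervals (a := (0:ℝ)) (b := x - R)
          (c := x + R) (Continuous.intervalIntegrable (u := fun y => y * h y) (continuous_id'.mul hhc) _ _)
          (Continuous.intervalIntegrable (u := fun y => y * h y) (continuous_id'.mul hhc) _ _)]
        ring
      rw [G, ← e1, ← e2, ← intervalIntegral.integral_const_mul,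
        ← intervalIntegral.integral_sub (Continuous.intervalIntegrable (u := fun y => x * h y) (continuous_const.mul hhc) _ _)
          (Continuous.intervalIntegrable (u := fun y => y * h y) (continuous_id'.mul hhc) _ _)]
      congr 1
      ext y
      ring
    rw [funext hGeq]
    have c1 := hprim h hhc
    have c2 := hprim (fun y => y * h y) (continuous_id'.mul hhc)
    exact ((continuous_id'.mul ((c1.comp (continuous_id'.add continuous_const)).sub
        (c1.comp (continuous_id'.sub continuous_const)))).sub
      ((c2.comp (continuous_id'.add continuous_const)).sub
        (c2.comp (continuous_id'.sub continuous_const))))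
  set c : ℝ := 2 / σ ^ 2 with hcdef
  have hc0 : 0 < c := by positivity
  set F : ℝ → ℝ := fun x => ∫ z in (0:ℝ)..x, G R M ρ ρr z with hFdef
  have hFd : ∀ x : ℝ, HasDerivAt F (G R M ρ ρr x) x := by
    intro x
    exact intervalIntegral.integral_hasDerivAt_right (hGc.intervalIntegrable _ _)
      (hGc.stronglyMeasurableAtFilter _ _) hGc.continuousAt
  have hFc : Continuous F := hprim _ hGc
  set K : ℝ := ∫ y in (0:ℝ)..1, Real.exp (-c * F y) with hKdef
  have hTeq : Tmap R M σ ρr ρ = fun x => Real.exp (-c * F x) / K := rfl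
  -- derivative
  have hTd : ∀ x : ℝ, HasDerivAt (Tmap R M σ ρr ρ)
      (-c * G R M ρ ρr x * Tmap R M σ ρr ρ x) x := by
    intro x
    have h1 : HasDerivAt (fun x => -c * F x) (-c * G R M ρ ρr x) x :=
      (hFd x).const_mul (-c)
    have h2 := h1.exp
    have h3 := h2.div_const K
    rw [hTeq]
    convert h3 using 1
    case e'_9 => beta_reduce; ring
    all_goals rfl
  have hTc : Continuous (Tmap R M σ ρr ρ) := by
    rw [hTeq]
    exact (continuous_const.mul hFc).rexp.div_const K
  have hderiv_eq : deriv (Tmap R M σ ρr ρ)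
      = fun x => -c * G R M ρ ρr x * Tmap R M σ ρr ρ x :=
    funext fun x => (hTd x).deriv
  refine ⟨fun x _ => hTd x, ?_, ?_⟩
  · rw [hderiv_eq]
    exact ((continuous_const.mul hGc).mul hTc).continuousOn
  · -- bound
    have hFb : ∀ x ∈ Set.Icc (0:ℝ) 1, |F x| ≤ B := by
      intro x hx
      have := intervalIntegral.norm_integral_le_of_norm_le_const
        (a := (0:ℝ)) (b := x) (C := B) (f := G R M ρ ρr)
        (fun y _ => by simpa using hGb y)
      rw [Real.norm_eq_abs] at this
      calc |F x| ≤ B * |x - 0| := this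
        _ ≤ B * 1 := by
            apply mul_le_mul_of_nonneg_left _ hB0
            rw [sub_zero, abs_of_nonneg hx.1]; exact hx.2
        _ = B := mul_one B
    have hexp_le : ∀ x ∈ Set.Icc (0:ℝ) 1, Real.exp (-c * F x) ≤ Real.exp (c * B) := by
      intro x hx
      apply Real.exp_le_exp.2
      have h1 : |F x| ≤ B := hFb x hx
      have h2 : -(F x) ≤ |F x| := neg_le_abs _
      nlinarith [hc0.le]
    have hexp_ge : ∀ x ∈ Set.Icc (0:ℝ) 1, Real.exp (-c * B) ≤ Real.exp (-c * F x) := by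
      intro x hx
      apply Real.exp_le_exp.2
      have h1 : |F x| ≤ B := hFb x hx
      have h2 : F x ≤ |F x| := le_abs_self _
      nlinarith [hc0.le]
    have hK_ge : Real.exp (-c * B) ≤ K := by
      calc Real.exp (-c * B) = ∫ _y in (0:ℝ)..1, Real.exp (-c * B) := by simp
        _ ≤ ∫ y in (0:ℝ)..1, Real.exp (-c * F y) :=
            intervalIntegral.integral_mono_on zero_le_one intervalIntegrable_const
              ((continuous_const.mul hFc).rexp.intervalIntegrable _ _) hexp_ge
    have hK0 : 0 < K := lt_of_lt_of_le (Real.exp_pos _) hK_ge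
    intro x hx
    have hxI : x ∈ Set.Icc (0:ℝ) 1 := ⟨hx.1.le, hx.2.le⟩
    have hTb : Tmap R M σ ρr ρ x ≤ Real.exp (c * B) / Real.exp (-c * B) := by
      rw [hTeq]
      exact div_le_div₀ (Real.exp_pos _).le (hexp_le x hxI) (Real.exp_pos _) hK_ge
    have hT0 : 0 ≤ Tmap R M σ ρr ρ x := by
      rw [hTeq]
      positivity
    rw [hderiv_eq]
    simp only
    rw [abs_mul, abs_mul, abs_neg, abs_of_pos hc0, abs_of_nonneg hT0]
    have step : c * |G R M ρ ρr x| * Tmap R M σ ρr ρ x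
        ≤ c * B * (Real.exp (c * B) / Real.exp (-c * B)) := by
      apply mul_le_mul (mul_le_mul_of_nonneg_left (hGb x) hc0.le) hTb hT0
      positivity
    have e1 : c * B = 4 * R * (1 + M) / σ ^ 2 := by
      rw [hcdef, hBdef]; field_simp; ring
    have e2 : Real.exp (c * B) / Real.exp (-c * B)
        = Real.exp (8 * R * (1 + M) / σ ^ 2) := by
      rw [← Real.exp_sub]
      congr 1
      rw [hcdef, hBdef]; field_simp; ring
    rw [e2, e1] at step
    exact step
end

section
/- Let 0 < R ≤ 1, M ≥ 0, σ > 0. Let ρ_r be a continuous even 2-periodic probability density and let ρ be a twice continuously differentiable even 2-periodic probability density. Then ρ satisfies the stationary Fokker–Planck equation (σ²/2) ρ''(x) + d/dx ( ρ(x) G_ρ(x) ) = 0 for all x ∈ ℝ if and only if ρ(x) = (T ρ)(x) for all x ∈ [0,1], i.e. ρ is a fixed point of the operator T. -/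
open MeasureTheory Real

lemma integral_sub_zero {f : ℝ → ℝ} (hf : Continuous f) (a b : ℝ) :
    ∫ y in a..b, f y = (∫ y in (0:ℝ)..b, f y) - ∫ y in (0:ℝ)..a, f y := by
  rw [eq_sub_iff_add_eq, add_comm,
    intervalIntegral.integral_add_adjacent_intervals (hf.intervalIntegrable _ _)
      (hf.intervalIntegrable _ _)]

lemma G_odd {R M : ℝ} {ρ ρr : ℝ → ℝ} (hρ : ∀ y, ρ (-y) = ρ y) (hρr : ∀ y, ρr (-y) = ρr y)
    (x : ℝ) : G R M ρ ρr (-x) = -G R M ρ ρr x := by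
  unfold G
  rw [show -x - R = -(x + R) by ring, show -x + R = -(x - R) by ring,
    ← intervalIntegral.integral_comp_neg (fun y => (-x - y) * (ρ y + M * ρr y))]
  have h1 : ∀ y : ℝ, (-x - -y) * (ρ (-y) + M * ρr (-y)) = -((x - y) * (ρ y + M * ρr y)) := by
    intro y; rw [hρ, hρr]; ring
  simp_rw [h1, intervalIntegral.integral_neg]

lemma G_per {R M : ℝ} {ρ ρr : ℝ → ℝ} (hρ : ∀ y, ρ (y + 2) = ρ y) (hρr : ∀ y, ρr (y + 2) = ρr y)
    (x : ℝ) : G R M ρ ρr (x + 2) = G R M ρ ρr x := by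
  unfold G
  rw [show x + 2 - R = (x - R) + 2 by ring, show x + 2 + R = (x + R) + 2 by ring,
    ← intervalIntegral.integral_comp_add_right (fun y => (x + 2 - y) * (ρ y + M * ρr y)) 2]
  have h1 : ∀ y : ℝ, (x + 2 - (y + 2)) * (ρ (y + 2) + M * ρr (y + 2))
      = (x - y) * (ρ y + M * ρr y) := by intro y; rw [hρ, hρr]; ring
  simp_rw [h1]

lemma G_differentiable {R M : ℝ} {ρ ρr : ℝ → ℝ} (hc : Continuous ρ) (hcr : Continuous ρr) :
    Differentiable ℝ (G R M ρ ρr) := by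
  set h : ℝ → ℝ := fun y => ρ y + M * ρr y with hh_def
  have hh : Continuous h := hc.add (continuous_const.mul hcr)
  set g : ℝ → ℝ := fun y => y * h y with hg_def
  have hg : Continuous g := continuous_id.mul hh
  have hGeq : G R M ρ ρr = fun x =>
      x * ((∫ y in (0:ℝ)..(x + R), h y) - ∫ y in (0:ℝ)..(x - R), h y)
        - ((∫ y in (0:ℝ)..(x + R), g y) - ∫ y in (0:ℝ)..(x - R), g y) := by
    funext x
    unfold G
    rw [← integral_sub_zero hh, ← integral_sub_zero hg, ← intervalIntegral.integral_const_mul,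
      ← intervalIntegral.integral_sub (f := fun y => x * h y) ((continuous_const.mul hh).intervalIntegrable _ _)
        (hg.intervalIntegrable _ _)]
    congr 1; funext y; simp only [hh_def, hg_def]; ring
  rw [hGeq]
  intro x
  have hA : ∀ t : ℝ, HasDerivAt (fun t => ∫ y in (0:ℝ)..t, h y) (h t) t := fun t =>
    (hh.integral_hasStrictDerivAt 0 t).hasDerivAt
  have hB : ∀ t : ℝ, HasDerivAt (fun t => ∫ y in (0:ℝ)..t, g y) (g t) t := fun t =>
    (hg.integral_hasStrictDerivAt 0 t).hasDerivAt
  have hAp : HasDerivAt (fun x : ℝ => ∫ y in (0:ℝ)..(x + R), h y) (h (x + R)) x := by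
    simpa [Function.comp_def] using (hA (x + R)).comp x ((hasDerivAt_id x).add_const R)
  have hAm : HasDerivAt (fun x : ℝ => ∫ y in (0:ℝ)..(x - R), h y) (h (x - R)) x := by
    simpa [Function.comp_def] using (hA (x - R)).comp x ((hasDerivAt_id x).sub_const R)
  have hBp : HasDerivAt (fun x : ℝ => ∫ y in (0:ℝ)..(x + R), g y) (g (x + R)) x := by
    simpa [Function.comp_def] using (hB (x + R)).comp x ((hasDerivAt_id x).add_const R)
  have hBm : HasDerivAt (fun x : ℝ => ∫ y in (0:ℝ)..(x - R), g y) (g (x - R)) x := by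
    simpa [Function.comp_def] using (hB (x - R)).comp x ((hasDerivAt_id x).sub_const R)
  exact (((hasDerivAt_id x).mul (hAp.sub hAm)).sub (hBp.sub hBm)).differentiableAt

lemma deriv_even {f : ℝ → ℝ} (hf : Differentiable ℝ f) (he : ∀ x, f (-x) = f x) (x : ℝ) :
    deriv f (-x) = -deriv f x := by
  have h1 : HasDerivAt (fun y : ℝ => f (-y)) (deriv f (-x) * (-1)) x :=
    ((hf (-x)).hasDerivAt).comp x (hasDerivAt_neg x)
  have h2 : (fun y : ℝ => f (-y)) = f := funext he
  rw [h2] at h1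
  have := h1.deriv
  linarith [this]

lemma int_odd_zero {G : ℝ → ℝ} (hGc : Continuous G) (hodd : ∀ x, G (-x) = -G x) :
    (∫ z in (-1:ℝ)..1, G z) = 0 := by
  have h1 : (∫ z in (0:ℝ)..1, G (-z)) = ∫ z in (-1:ℝ)..(-0:ℝ), G z :=
    intervalIntegral.integral_comp_neg G
  simp_rw [hodd, intervalIntegral.integral_neg] at h1
  rw [← intervalIntegral.integral_add_adjacent_intervals (a := (-1:ℝ)) (b := 0) (c := 1)
    (hGc.intervalIntegrable _ _) (hGc.intervalIntegrable _ _)]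
  rw [neg_zero] at h1
  rw [← h1]; ring

lemma I_even {G : ℝ → ℝ} (hodd : ∀ x, G (-x) = -G x) (x : ℝ) :
    (∫ z in (0:ℝ)..(-x), G z) = ∫ z in (0:ℝ)..x, G z := by
  have h1 : (∫ z in (0:ℝ)..x, G (-z)) = ∫ z in (-x:ℝ)..(-0:ℝ), G z :=
    intervalIntegral.integral_comp_neg G
  rw [neg_zero] at h1
  have h2 : (∫ z in (0:ℝ)..x, G (-z)) = -∫ z in (0:ℝ)..x, G z := by
    simp_rw [hodd]; exact intervalIntegral.integral_neg
  have h3 : (∫ z in (-x:ℝ)..(0:ℝ), G z) = -∫ z in (0:ℝ)..(-x), G z :=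
    intervalIntegral.integral_symm 0 (-x)
  linarith [h1, h2, h3]

lemma I_per {G : ℝ → ℝ} (hGc : Continuous G) (hodd : ∀ x, G (-x) = -G x)
    (hper : ∀ x, G (x + 2) = G x) (x : ℝ) :
    (∫ z in (0:ℝ)..(x + 2), G z) = ∫ z in (0:ℝ)..x, G z := by
  rw [← intervalIntegral.integral_add_adjacent_intervals (a := (0:ℝ)) (b := x) (c := x + 2)
    (hGc.intervalIntegrable _ _) (hGc.intervalIntegrable _ _)]
  have hP : Function.Periodic G 2 := hper
  have h2 : (∫ z in x..(x + 2), G z) = ∫ z in (-1:ℝ)..(-1 + 2:ℝ), G z :=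
    hP.intervalIntegral_add_eq x (-1)
  rw [h2, show (-1 + 2 : ℝ) = 1 by norm_num, int_odd_zero hGc hodd, add_zero]

lemma ext_even_periodic {f g : ℝ → ℝ} (hfp : ∀ x, f (x + 2) = f x) (hfe : ∀ x, f (-x) = f x)
    (hgp : ∀ x, g (x + 2) = g x) (hge : ∀ x, g (-x) = g x)
    (h : ∀ x ∈ Set.Icc (0:ℝ) 1, f x = g x) (x : ℝ) : f x = g x := by
  have key : ∀ u : ℝ, 0 ≤ u → u < 2 → f u = g u := by
    intro u hu0 hu2
    rcases le_or_gt u 1 with h1 | h1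
    · exact h u ⟨hu0, h1⟩
    · have hfu : f u = f (2 - u) := by
        have := hfp (u - 2)
        rw [show u - 2 + 2 = u by ring] at this
        rw [this, show u - 2 = -(2 - u) by ring, hfe]
      have hgu : g u = g (2 - u) := by
        have := hgp (u - 2)
        rw [show u - 2 + 2 = u by ring] at this
        rw [this, show u - 2 = -(2 - u) by ring, hge]
      rw [hfu, hgu]
      exact h (2 - u) ⟨by linarith, by linarith⟩
  have hPf : Function.Periodic f 2 := hfp
  have hPg : Function.Periodic g 2 := hgp
  set n : ℤ := ⌊x / 2⌋ with hn
  have hfx : f x = f (x - n * 2) := (hPf.sub_int_mul_eq n).symm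
  have hgx : g x = g (x - n * 2) := (hPg.sub_int_mul_eq n).symm
  rw [hfx, hgx]
  apply key
  · have h1 : (n : ℝ) ≤ x / 2 := Int.floor_le _
    linarith
  · have h2 : x / 2 < n + 1 := Int.lt_floor_add_one _
    linarith

theorem stmt_12 (R M σ : ℝ) (hR : 0 < R) (hR1 : R ≤ 1) (hM : 0 ≤ M) (hσ : 0 < σ)
    (ρr : ℝ → ℝ) (hρrc : Continuous ρr) (hρr : IsEvenPeriodicDensity ρr)
    (ρ : ℝ → ℝ) (hρ : ContDiff ℝ 2 ρ) (hρd : IsEvenPeriodicDensity ρ) :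
    (∀ x : ℝ,
        σ ^ 2 / 2 * deriv (deriv ρ) x
          + deriv (fun y => ρ y * G R M ρ ρr y) x = 0)
      ↔ ∀ x ∈ Set.Icc (0:ℝ) 1, ρ x = Tmap R M σ ρr ρ x := by
  obtain ⟨hρp, hρe, hρnn, hρint⟩ := hρd
  obtain ⟨hρrp, hρre, hρrnn, hρrint⟩ := hρr
  have hρc : Continuous ρ := hρ.continuous
  have hσ2 : (σ:ℝ) ^ 2 ≠ 0 := by positivity
  set c : ℝ := 2 / σ ^ 2 with hc
  have hGd : Differentiable ℝ (G R M ρ ρr) := G_differentiable hρc hρrc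
  have hGc : Continuous (G R M ρ ρr) := hGd.continuous
  have hGodd : ∀ x, G R M ρ ρr (-x) = -G R M ρ ρr x := G_odd hρe hρre
  have hGper : ∀ x, G R M ρ ρr (x + 2) = G R M ρ ρr x := G_per hρp hρrp
  set I : ℝ → ℝ := fun x => ∫ z in (0:ℝ)..x, G R M ρ ρr z with hI_def
  have hI : ∀ x, HasDerivAt I (G R M ρ ρr x) x := fun x =>
    (hGc.integral_hasStrictDerivAt 0 x).hasDerivAt
  have hIc : Continuous I := Differentiable.continuous (fun x => (hI x).differentiableAt)
  set E : ℝ → ℝ := fun x => Real.exp (-c * I x) with hE_def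
  have hE : ∀ x, HasDerivAt E (-c * G R M ρ ρr x * E x) x := by
    intro x
    have h1 := ((hI x).const_mul (-c)).exp
    convert h1 using 1
    simp only [hE_def]; ring
  have hEc : Continuous E := Real.continuous_exp.comp (continuous_const.mul hIc)
  set K : ℝ := ∫ y in (0:ℝ)..1, E y with hK_def
  have hKpos : 0 < K :=
    intervalIntegral.intervalIntegral_pos_of_pos (hEc.intervalIntegrable 0 1)
      (fun x => Real.exp_pos _) one_pos
  have hT : ∀ x, Tmap R M σ ρr ρ x = E x / K := fun x => rfl
  have hρd1 : Differentiable ℝ ρ := hρ.differentiable (by norm_num)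
  constructor
  · -- FP equation implies fixed point
    intro hFP x hx
    have hρ2 : ContDiff ℝ ((1:ℕ) + 1) ρ := by
      exact_mod_cast hρ
    have hdρ : ContDiff ℝ (1:ℕ) (deriv ρ) := (contDiff_succ_iff_deriv.mp hρ2).2.2
    have hdρd : Differentiable ℝ (deriv ρ) := hdρ.differentiable (by norm_num)
    set F : ℝ → ℝ := fun x => σ ^ 2 / 2 * deriv ρ x + ρ x * G R M ρ ρr x with hF_def
    have hFd : Differentiable ℝ F :=
      ((differentiable_const _).mul hdρd).add (hρd1.mul hGd)
    have hF' : ∀ y, deriv F y = 0 := by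
      intro y
      have h1 : deriv F y = σ ^ 2 / 2 * deriv (deriv ρ) y
          + deriv (fun z => ρ z * G R M ρ ρr z) y := by
        rw [hF_def, deriv_fun_add (((differentiableAt_const _).fun_mul (hdρd y)))
          ((hρd1 y).fun_mul (hGd y)), deriv_const_mul _ (hdρd y)]
      rw [h1]; exact hFP y
    have hFconst : ∀ y, F y = F 0 := fun y => is_const_of_deriv_eq_zero hFd hF' y 0
    have hFodd : ∀ y, F (-y) = -F y := by
      intro y
      simp only [hF_def]
      rw [deriv_even hρd1 hρe y, hρe y, hGodd y]; ring
    have hF0 : F 0 = 0 := by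
      have := hFodd 0; rw [neg_zero] at this; linarith
    have hFzero : ∀ y, F y = 0 := fun y => (hFconst y).trans hF0
    have hρ' : ∀ y, deriv ρ y = -c * G R M ρ ρr y * ρ y := by
      intro y
      have h1 := hFzero y
      simp only [hF_def] at h1
      rw [hc]
      field_simp
      linear_combination (2:ℝ) * h1
    set ψ : ℝ → ℝ := fun y => ρ y * Real.exp (c * I y) with hψ_def
    have hψ' : ∀ y, HasDerivAt ψ 0 y := by
      intro y
      have h1 : HasDerivAt (fun z => Real.exp (c * I z))
          (Real.exp (c * I y) * (c * G R M ρ ρr y)) y := ((hI y).const_mul c).exp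
      have h2 := ((hρd1 y).hasDerivAt).mul h1
      have h3 : deriv ρ y * Real.exp (c * I y)
          + ρ y * (Real.exp (c * I y) * (c * G R M ρ ρr y)) = 0 := by
        rw [hρ' y]; ring
      rw [h3] at h2
      exact h2
    have hψc : ∀ y, ψ y = ψ 0 := fun y =>
      is_const_of_deriv_eq_zero (fun z => (hψ' z).differentiableAt)
        (fun z => (hψ' z).deriv) y 0
    have hI0 : I 0 = 0 := intervalIntegral.integral_same
    have hψ0 : ψ 0 = ρ 0 := by
      simp only [hψ_def, hI0, mul_zero, Real.exp_zero, mul_one]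
    have hρeq : ∀ y, ρ y = ρ 0 * E y := by
      intro y
      have h1 := (hψc y).trans hψ0
      simp only [hψ_def] at h1
      have : E y = Real.exp (-(c * I y)) := by simp only [hE_def]; ring_nf
      rw [this, Real.exp_neg]
      rw [← h1]
      field_simp
    have hK1 : ρ 0 * K = 1 := by
      have h1 : (∫ y in (0:ℝ)..1, ρ 0 * E y) = ∫ y in (0:ℝ)..1, ρ y :=
        intervalIntegral.integral_congr fun y _ => (hρeq y).symm
      rw [hK_def, ← intervalIntegral.integral_const_mul, h1, hρint]
    have hρ0 : ρ 0 = 1 / K := by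
      field_simp
      linarith [hK1]
    rw [hT x, hρeq x, hρ0]
    ring
  · -- fixed point implies FP equation
    intro hfix x
    have hEe : ∀ y, E (-y) = E y := by
      intro y
      have : I (-y) = I y := I_even hGodd y
      simp only [hE_def, this]
    have hEp : ∀ y, E (y + 2) = E y := by
      intro y
      have : I (y + 2) = I y := I_per hGc hGodd hGper y
      simp only [hE_def, this]
    have hρφ : ∀ y, ρ y = E y / K :=
      ext_even_periodic hρp hρe (fun y => by rw [hEp y]) (fun y => by rw [hEe y])
        (fun y hy => (hfix y hy).trans (hT y))
    have hρ1 : ∀ y, HasDerivAt ρ (-c * G R M ρ ρr y * ρ y) y := by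
      intro y
      have h1 : HasDerivAt (fun z => E z / K) (-c * G R M ρ ρr y * E y / K) y :=
        (hE y).div_const K
      have h2 : (fun z => E z / K) = ρ := funext fun z => (hρφ z).symm
      rw [h2] at h1
      have h3 : -c * G R M ρ ρr y * E y / K = -c * G R M ρ ρr y * ρ y := by
        rw [hρφ y]; ring
      rw [h3] at h1
      exact h1
    have hdρ_eq : deriv ρ = fun y => -c * G R M ρ ρr y * ρ y :=
      funext fun y => (hρ1 y).deriv
    have hG' : HasDerivAt (G R M ρ ρr) (deriv (G R M ρ ρr) x) x := (hGd x).hasDerivAt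
    have h2nd : HasDerivAt (fun y => -c * G R M ρ ρr y * ρ y)
        (-c * (deriv (G R M ρ ρr) x * ρ x
          + G R M ρ ρr x * (-c * G R M ρ ρr x * ρ x))) x := by
      have h1 := (hG'.fun_mul (hρ1 x)).const_mul (-c)
      have h2 : (fun y => -c * (G R M ρ ρr y * ρ y)) = fun y => -c * G R M ρ ρr y * ρ y := by
        funext y; ring
      rw [h2] at h1
      convert h1 using 1 <;> ring
    have hmul : HasDerivAt (fun y => ρ y * G R M ρ ρr y)
        (-c * G R M ρ ρr x * ρ x * G R M ρ ρr x + ρ x * deriv (G R M ρ ρr) x) x :=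
      (hρ1 x).mul hG'
    rw [hdρ_eq, h2nd.deriv, hmul.deriv, hc]
    field_simp
    ring
end

section
/- Let 0 < R ≤ 1, M ≥ 0, σ > 0, and let ρ_r, ρ₁, ρ₂ be even 2-periodic probability densities. For i = 1,2 set K_i = ∫₀¹ exp( −(2/σ²) ∫₀^x G_{ρ_i}(z) dz ) dx. Then exp( −(4R/σ²) ∫₀¹ |ρ₂ − ρ₁| ) ≤ K₁ / K₂ ≤ exp( (4R/σ²) ∫₀¹ |ρ₂ − ρ₁| ). -/
open MeasureTheory Real

lemma periodic_ii {f : ℝ → ℝ} (hp : Function.Periodic f 2)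
    (h02 : IntervalIntegrable f volume 0 2) :
    ∀ a b : ℝ, IntervalIntegrable f volume a b := by
  have block : ∀ n : ℤ, IntervalIntegrable f volume (2*n) (2*n+2) := by
    intro n
    have h := h02.comp_sub_right (2*n)
    have hfe : (fun x => f (x - 2*(n:ℝ))) = f := by
      funext x
      have := hp.sub_int_mul_eq (n := n) (x := x)
      simpa [mul_comm] using this
    rw [hfe] at h
    simpa [add_comm] using h
  have chain : ∀ k : ℕ, ∀ n : ℤ, IntervalIntegrable f volume (2*n) (2*n+2*k) := by
    intro k
    induction k with
    | zero => intro n; simp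
    | succ k ih =>
      intro n
      have h1 := ih n
      have h2 := block (n + k)
      have h3 : IntervalIntegrable f volume (2*(n:ℝ)+2*(k:ℝ)) (2*(n:ℝ)+2*((k:ℝ)+1)) := by
        have e1 : (2*(((n+(k:ℤ)):ℤ):ℝ)) = 2*(n:ℝ)+2*(k:ℝ) := by push_cast; ring
        rw [e1] at h2
        have e2 : 2*(n:ℝ)+2*(k:ℝ)+2 = 2*(n:ℝ)+2*((k:ℝ)+1) := by ring
        rw [e2] at h2; exact h2
      have h4 := h1.trans h3
      have e3 : ((k+1:ℕ):ℝ) = (k:ℝ)+1 := by push_cast; ring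
      rw [e3]; exact h4
  intro a b
  wlog hab : a ≤ b generalizing a b
  · exact (this b a (le_of_not_ge hab)).symm
  set n : ℤ := ⌊a/2⌋ with hn
  have hna : 2*(n:ℝ) ≤ a := by
    have := Int.floor_le (a/2); rw [← hn] at this; linarith
  obtain ⟨k, hk⟩ := exists_nat_ge ((b - 2*(n:ℝ))/2)
  have hkb : b ≤ 2*(n:ℝ) + 2*k := by linarith
  refine (chain k n).mono_set ?_
  apply Set.uIcc_subset_uIcc
  · exact Set.mem_uIcc.2 (Or.inl ⟨hna, hab.trans hkb⟩)
  · exact Set.mem_uIcc.2 (Or.inl ⟨hna.trans hab, hkb⟩)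

lemma density_ii {f : ℝ → ℝ} (hf : IsEvenPeriodicDensity f) :
    ∀ a b : ℝ, IntervalIntegrable f volume a b := by
  obtain ⟨hper, heven, hnn, hint⟩ := hf
  have hp : Function.Periodic f 2 := hper
  have h01 : IntervalIntegrable f volume 0 1 := by
    by_contra h
    rw [intervalIntegral.integral_undef h] at hint
    norm_num at hint
  have h12 : IntervalIntegrable f volume 1 2 := by
    have h := (h01.comp_sub_left 2).symm
    have he : (fun x => f (2 - x)) = f := by
      funext x
      calc f (2 - x) = f (-x + 2) := by rw [show (2:ℝ) - x = -x + 2 by ring]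
        _ = f (-x) := hper (-x)
        _ = f x := heven x
    rw [he] at h
    norm_num at h; exact h
  exact periodic_ii hp (h01.trans h12)

lemma window_bound {d : ℝ → ℝ} (hper : ∀ x, d (x+2) = d x) (heven : ∀ x, d (-x) = d x)
    (hnn : ∀ x, 0 ≤ d x) (hii : ∀ a b : ℝ, IntervalIntegrable d volume a b)
    {R : ℝ} (hR : 0 < R) (hR1 : R ≤ 1) (z : ℝ) :
    ∫ y in (z-R)..(z+R), d y ≤ 2 * ∫ y in (0:ℝ)..1, d y := by
  have hp : Function.Periodic d 2 := hper
  have h1 : ∫ y in (z-R)..(z+R), d y ≤ ∫ y in (z-1)..(z+1), d y :=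
    intervalIntegral.integral_mono_interval (by linarith) (by linarith) (by linarith)
      (Filter.Eventually.of_forall fun x => hnn x) (hii _ _)
  have h2 : ∫ y in (z-1)..(z+1), d y = ∫ y in (-1:ℝ)..1, d y := by
    have h := hp.intervalIntegral_add_eq (z-1) (-1)
    rw [show z - 1 + 2 = z + 1 by ring, show (-1:ℝ) + 2 = 1 by norm_num] at h
    exact h
  have h3 : ∫ y in (-1:ℝ)..(0:ℝ), d y = ∫ y in (0:ℝ)..1, d y := by
    have hcong : ∫ y in (-1:ℝ)..(0:ℝ), d y = ∫ y in (-1:ℝ)..(0:ℝ), d (-y) :=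
      intervalIntegral.integral_congr (fun y _ => (heven y).symm)
    rw [hcong, intervalIntegral.integral_comp_neg]
    norm_num
  have h4 : ∫ y in (-1:ℝ)..1, d y = (∫ y in (-1:ℝ)..0, d y) + ∫ y in (0:ℝ)..1, d y :=
    (intervalIntegral.integral_add_adjacent_intervals (hii _ _) (hii _ _)).symm
  linarith

lemma G_eq {R M : ℝ} {ρ ρr : ℝ → ℝ}
    (hg : ∀ a b : ℝ, IntervalIntegrable (fun y => ρ y + M * ρr y) volume a b) (z : ℝ) :
    G R M ρ ρr z =
      z * ((∫ y in (0:ℝ)..(z+R), (ρ y + M * ρr y)) - ∫ y in (0:ℝ)..(z-R), (ρ y + M * ρr y))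
      - ((∫ y in (0:ℝ)..(z+R), y * (ρ y + M * ρr y))
          - ∫ y in (0:ℝ)..(z-R), y * (ρ y + M * ρr y)) := by
  have hyg : ∀ a b : ℝ, IntervalIntegrable (fun y => y * (ρ y + M * ρr y)) volume a b :=
    fun a b => (hg a b).continuousOn_mul continuous_id.continuousOn
  have hzg : ∀ a b : ℝ, IntervalIntegrable (fun y => z * (ρ y + M * ρr y)) volume a b :=
    fun a b => (hg a b).const_mul z
  have step1 : G R M ρ ρr z = (∫ y in (z-R)..(z+R), z * (ρ y + M * ρr y))
      - ∫ y in (z-R)..(z+R), y * (ρ y + M * ρr y) := by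
    rw [G, ← intervalIntegral.integral_sub (hzg _ _) (hyg _ _)]
    apply intervalIntegral.integral_congr
    intro y _
    ring
  have e1 : (∫ y in (z-R)..(z+R), z * (ρ y + M * ρr y))
      = z * ∫ y in (z-R)..(z+R), (ρ y + M * ρr y) := intervalIntegral.integral_const_mul _ _
  have e2 : (∫ y in (0:ℝ)..(z+R), (ρ y + M * ρr y)) - (∫ y in (0:ℝ)..(z-R), (ρ y + M * ρr y))
      = ∫ y in (z-R)..(z+R), (ρ y + M * ρr y) :=
    intervalIntegral.integral_interval_sub_left (hg _ _) (hg _ _)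
  have e3 : (∫ y in (0:ℝ)..(z+R), y * (ρ y + M * ρr y))
      - (∫ y in (0:ℝ)..(z-R), y * (ρ y + M * ρr y))
      = ∫ y in (z-R)..(z+R), y * (ρ y + M * ρr y) :=
    intervalIntegral.integral_interval_sub_left (hyg _ _) (hyg _ _)
  rw [step1, e1, e2, e3]

lemma G_continuous {R M : ℝ} {ρ ρr : ℝ → ℝ}
    (hg : ∀ a b : ℝ, IntervalIntegrable (fun y => ρ y + M * ρr y) volume a b) :
    Continuous (G R M ρ ρr) := by
  have hyg : ∀ a b : ℝ, IntervalIntegrable (fun y => y * (ρ y + M * ρr y)) volume a b :=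
    fun a b => (hg a b).continuousOn_mul continuous_id.continuousOn
  have c1 : Continuous fun t => ∫ y in (0:ℝ)..t, (ρ y + M * ρr y) :=
    intervalIntegral.continuous_primitive hg 0
  have c2 : Continuous fun t => ∫ y in (0:ℝ)..t, y * (ρ y + M * ρr y) :=
    intervalIntegral.continuous_primitive hyg 0
  have heq : G R M ρ ρr = fun z =>
      z * ((∫ y in (0:ℝ)..(z+R), (ρ y + M * ρr y)) - ∫ y in (0:ℝ)..(z-R), (ρ y + M * ρr y))
      - ((∫ y in (0:ℝ)..(z+R), y * (ρ y + M * ρr y))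
          - ∫ y in (0:ℝ)..(z-R), y * (ρ y + M * ρr y)) := funext (G_eq hg)
  rw [heq]
  exact (continuous_id.mul ((c1.comp (continuous_id.add continuous_const)).sub
      (c1.comp (continuous_id.sub continuous_const)))).sub
    ((c2.comp (continuous_id.add continuous_const)).sub
      (c2.comp (continuous_id.sub continuous_const)))

lemma G_diff_bound {R M : ℝ} (hR : 0 < R) (hR1 : R ≤ 1) (hM : 0 ≤ M)
    {ρ₁ ρ₂ ρr : ℝ → ℝ}
    (h1 : IsEvenPeriodicDensity ρ₁) (h2 : IsEvenPeriodicDensity ρ₂)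
    (hr : IsEvenPeriodicDensity ρr) (z : ℝ) :
    |G R M ρ₁ ρr z - G R M ρ₂ ρr z| ≤ 2 * R * ∫ y in (0:ℝ)..1, |ρ₂ y - ρ₁ y| := by
  have i1 := density_ii h1
  have i2 := density_ii h2
  have ir := density_ii hr
  set d : ℝ → ℝ := fun y => |ρ₂ y - ρ₁ y| with hd
  have dii : ∀ a b : ℝ, IntervalIntegrable d volume a b := fun a b => ((i2 a b).sub (i1 a b)).abs
  have hzR : z - R ≤ z + R := by linarith
  have cz : ContinuousOn (fun y : ℝ => z - y) (Set.uIcc (z-R) (z+R)) :=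
    (continuous_const.sub continuous_id).continuousOn
  have g1ii : IntervalIntegrable (fun y => ρ₁ y + M * ρr y) volume (z-R) (z+R) :=
    (i1 _ _).add ((ir _ _).const_mul M)
  have g2ii : IntervalIntegrable (fun y => ρ₂ y + M * ρr y) volume (z-R) (z+R) :=
    (i2 _ _).add ((ir _ _).const_mul M)
  have p1 : IntervalIntegrable (fun y => (z - y) * (ρ₁ y + M * ρr y)) volume (z-R) (z+R) :=
    g1ii.continuousOn_mul cz
  have p2 : IntervalIntegrable (fun y => (z - y) * (ρ₂ y + M * ρr y)) volume (z-R) (z+R) :=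
    g2ii.continuousOn_mul cz
  have hdiff : G R M ρ₁ ρr z - G R M ρ₂ ρr z
      = ∫ y in (z-R)..(z+R), (z - y) * (ρ₁ y - ρ₂ y) := by
    rw [G, G, ← intervalIntegral.integral_sub p1 p2]
    apply intervalIntegral.integral_congr
    intro y _
    ring
  have pd : IntervalIntegrable (fun y => (z - y) * (ρ₁ y - ρ₂ y)) volume (z-R) (z+R) :=
    ((i1 _ _).sub (i2 _ _)).continuousOn_mul cz
  have habs : |∫ y in (z-R)..(z+R), (z - y) * (ρ₁ y - ρ₂ y)|
      ≤ ∫ y in (z-R)..(z+R), |(z - y) * (ρ₁ y - ρ₂ y)| :=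
    intervalIntegral.abs_integral_le_integral_abs hzR
  have hmono : (∫ y in (z-R)..(z+R), |(z - y) * (ρ₁ y - ρ₂ y)|)
      ≤ ∫ y in (z-R)..(z+R), R * d y := by
    apply intervalIntegral.integral_mono_on hzR pd.abs ((dii _ _).const_mul R)
    intro y hy
    rw [abs_mul]
    have hb : |z - y| ≤ R := by
      rw [abs_le]
      constructor
      · linarith [hy.2]
      · linarith [hy.1]
    calc |z - y| * |ρ₁ y - ρ₂ y| ≤ R * |ρ₁ y - ρ₂ y| :=
        mul_le_mul_of_nonneg_right hb (abs_nonneg _)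
      _ = R * d y := by simp only [hd]; rw [abs_sub_comm]
  have hconst : (∫ y in (z-R)..(z+R), R * d y) = R * ∫ y in (z-R)..(z+R), d y :=
    intervalIntegral.integral_const_mul _ _
  have hdper : ∀ x, d (x+2) = d x := fun x => by simp only [hd, h1.1 x, h2.1 x]
  have hdeven : ∀ x, d (-x) = d x := fun x => by simp only [hd, h1.2.1 x, h2.2.1 x]
  have hwin := window_bound hdper hdeven (fun x => abs_nonneg _) dii hR hR1 z
  calc |G R M ρ₁ ρr z - G R M ρ₂ ρr z|
      = |∫ y in (z-R)..(z+R), (z - y) * (ρ₁ y - ρ₂ y)| := by rw [hdiff]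
    _ ≤ ∫ y in (z-R)..(z+R), |(z - y) * (ρ₁ y - ρ₂ y)| := habs
    _ ≤ ∫ y in (z-R)..(z+R), R * d y := hmono
    _ = R * ∫ y in (z-R)..(z+R), d y := hconst
    _ ≤ R * (2 * ∫ y in (0:ℝ)..1, d y) := mul_le_mul_of_nonneg_left hwin hR.le
    _ = 2 * R * ∫ y in (0:ℝ)..1, d y := by ring

theorem stmt_14 (R M σ : ℝ) (hR : 0 < R) (hR1 : R ≤ 1) (hM : 0 ≤ M) (hσ : 0 < σ)
    (ρr ρ₁ ρ₂ : ℝ → ℝ) (hρr : IsEvenPeriodicDensity ρr)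
    (hρ₁ : IsEvenPeriodicDensity ρ₁) (hρ₂ : IsEvenPeriodicDensity ρ₂)
    (K₁ K₂ : ℝ)
    (hK₁ : K₁ = ∫ x in (0:ℝ)..1,
      Real.exp (-(2 / σ ^ 2) * ∫ z in (0:ℝ)..x, G R M ρ₁ ρr z))
    (hK₂ : K₂ = ∫ x in (0:ℝ)..1,
      Real.exp (-(2 / σ ^ 2) * ∫ z in (0:ℝ)..x, G R M ρ₂ ρr z)) :
    Real.exp (-(4 * R / σ ^ 2) * ∫ y in (0:ℝ)..1, |ρ₂ y - ρ₁ y|) ≤ K₁ / K₂ ∧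
      K₁ / K₂ ≤ Real.exp ((4 * R / σ ^ 2) * ∫ y in (0:ℝ)..1, |ρ₂ y - ρ₁ y|) := by
  have i1 := density_ii hρ₁
  have i2 := density_ii hρ₂
  have ir := density_ii hρr
  set I : ℝ := ∫ y in (0:ℝ)..1, |ρ₂ y - ρ₁ y| with hI
  have hInn : 0 ≤ I := by
    rw [hI]
    exact intervalIntegral.integral_nonneg (by norm_num) (fun y _ => abs_nonneg _)
  have g1ii : ∀ a b : ℝ, IntervalIntegrable (fun y => ρ₁ y + M * ρr y) volume a b :=
    fun a b => (i1 a b).add ((ir a b).const_mul M)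
  have g2ii : ∀ a b : ℝ, IntervalIntegrable (fun y => ρ₂ y + M * ρr y) volume a b :=
    fun a b => (i2 a b).add ((ir a b).const_mul M)
  have hc1 : Continuous (G R M ρ₁ ρr) := G_continuous g1ii
  have hc2 : Continuous (G R M ρ₂ ρr) := G_continuous g2ii
  have hcp : 0 < 2 / σ ^ 2 := by positivity
  set C : ℝ := 4 * R / σ ^ 2 * I with hC
  have hCnn : 0 ≤ C := by rw [hC]; positivity
  -- bound on the difference of primitives
  have key : ∀ x ∈ Set.Icc (0:ℝ) 1,
      |(∫ z in (0:ℝ)..x, G R M ρ₁ ρr z) - ∫ z in (0:ℝ)..x, G R M ρ₂ ρr z| ≤ 2 * R * I := by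
    intro x hx
    have hx0 : (0:ℝ) ≤ x := hx.1
    have hsub : (∫ z in (0:ℝ)..x, G R M ρ₁ ρr z) - (∫ z in (0:ℝ)..x, G R M ρ₂ ρr z)
        = ∫ z in (0:ℝ)..x, (G R M ρ₁ ρr z - G R M ρ₂ ρr z) :=
      (intervalIntegral.integral_sub (hc1.intervalIntegrable _ _)
        (hc2.intervalIntegrable _ _)).symm
    rw [hsub]
    calc |∫ z in (0:ℝ)..x, (G R M ρ₁ ρr z - G R M ρ₂ ρr z)|
        ≤ ∫ z in (0:ℝ)..x, |G R M ρ₁ ρr z - G R M ρ₂ ρr z| :=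
          intervalIntegral.abs_integral_le_integral_abs hx0
      _ ≤ ∫ _z in (0:ℝ)..x, (2 * R * I) := by
          apply intervalIntegral.integral_mono_on hx0
            ((hc1.sub hc2).abs.intervalIntegrable _ _) intervalIntegrable_const
          intro z _
          exact G_diff_bound hR hR1 hM hρ₁ hρ₂ hρr z
      _ = x * (2 * R * I) := by
          rw [intervalIntegral.integral_const, smul_eq_mul, sub_zero]
      _ ≤ 1 * (2 * R * I) := mul_le_mul_of_nonneg_right hx.2 (by positivity)
      _ = 2 * R * I := one_mul _
  -- pointwise exponential comparison
  have hexp12 : ∀ x ∈ Set.Icc (0:ℝ) 1,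
      Real.exp (-(2 / σ ^ 2) * ∫ z in (0:ℝ)..x, G R M ρ₁ ρr z)
        ≤ Real.exp C * Real.exp (-(2 / σ ^ 2) * ∫ z in (0:ℝ)..x, G R M ρ₂ ρr z) := by
    intro x hx
    rw [← Real.exp_add, Real.exp_le_exp]
    have h := (abs_le.1 (key x hx)).1
    have hmul : (2 / σ ^ 2) * ((∫ z in (0:ℝ)..x, G R M ρ₂ ρr z)
        - ∫ z in (0:ℝ)..x, G R M ρ₁ ρr z) ≤ (2 / σ ^ 2) * (2 * R * I) := by
      apply mul_le_mul_of_nonneg_left _ hcp.le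
      linarith
    have hCe : (2 / σ ^ 2) * (2 * R * I) = C := by rw [hC]; ring
    nlinarith [hmul, hCe]
  have hexp21 : ∀ x ∈ Set.Icc (0:ℝ) 1,
      Real.exp (-(2 / σ ^ 2) * ∫ z in (0:ℝ)..x, G R M ρ₂ ρr z)
        ≤ Real.exp C * Real.exp (-(2 / σ ^ 2) * ∫ z in (0:ℝ)..x, G R M ρ₁ ρr z) := by
    intro x hx
    rw [← Real.exp_add, Real.exp_le_exp]
    have h := (abs_le.1 (key x hx)).2
    have hmul : (2 / σ ^ 2) * ((∫ z in (0:ℝ)..x, G R M ρ₁ ρr z)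
        - ∫ z in (0:ℝ)..x, G R M ρ₂ ρr z) ≤ (2 / σ ^ 2) * (2 * R * I) := by
      apply mul_le_mul_of_nonneg_left _ hcp.le
      linarith
    have hCe : (2 / σ ^ 2) * (2 * R * I) = C := by rw [hC]; ring
    nlinarith [hmul, hCe]
  -- continuity of the integrands
  have E1cont : Continuous fun x => Real.exp (-(2 / σ ^ 2) * ∫ z in (0:ℝ)..x, G R M ρ₁ ρr z) :=
    Real.continuous_exp.comp (continuous_const.mul
      (intervalIntegral.continuous_primitive (fun a b => hc1.intervalIntegrable a b) 0))
  have E2cont : Continuous fun x => Real.exp (-(2 / σ ^ 2) * ∫ z in (0:ℝ)..x, G R M ρ₂ ρr z) :=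
    Real.continuous_exp.comp (continuous_const.mul
      (intervalIntegral.continuous_primitive (fun a b => hc2.intervalIntegrable a b) 0))
  have hK₁pos : 0 < K₁ := by
    rw [hK₁]
    exact intervalIntegral.intervalIntegral_pos_of_pos (E1cont.intervalIntegrable 0 1)
      (fun x => Real.exp_pos _) one_pos
  have hK₂pos : 0 < K₂ := by
    rw [hK₂]
    exact intervalIntegral.intervalIntegral_pos_of_pos (E2cont.intervalIntegrable 0 1)
      (fun x => Real.exp_pos _) one_pos
  have hK12 : K₁ ≤ Real.exp C * K₂ := by
    rw [hK₁, hK₂, ← intervalIntegral.integral_const_mul]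
    exact intervalIntegral.integral_mono_on (by norm_num) (E1cont.intervalIntegrable 0 1)
      ((continuous_const.mul E2cont).intervalIntegrable 0 1) hexp12
  have hK21 : K₂ ≤ Real.exp C * K₁ := by
    rw [hK₁, hK₂, ← intervalIntegral.integral_const_mul]
    exact intervalIntegral.integral_mono_on (by norm_num) (E2cont.intervalIntegrable 0 1)
      ((continuous_const.mul E1cont).intervalIntegrable 0 1) hexp21
  constructor
  · rw [show -(4 * R / σ ^ 2) * I = -C by rw [hC]; ring, le_div_iff₀ hK₂pos, Real.exp_neg]
    calc (Real.exp C)⁻¹ * K₂ ≤ (Real.exp C)⁻¹ * (Real.exp C * K₁) :=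
        mul_le_mul_of_nonneg_left hK21 (by positivity)
      _ = K₁ := by field_simp
  · rw [div_le_iff₀ hK₂pos]
    exact hK12
end

section
/- Let 0 < S and S ≤ A ≤ 1 − S, and define f : ℝ → ℝ by f(x) = (1/S²) · max( S − | |x| − A | , 0 ) for x ∈ [-1,1] (the even extension to [-1,1] of the triangular density on [0,1] centered at A with half-width S). Then for every positive integer n, ∫_{-1}^{1} f(x) cos(nπx) dx = 2 cos(nπA) · ( sin(nπS/2) / (nπS/2) )². -/
open MeasureTheory Real

lemma lin_cos (k c d a b : ℝ) (hk : k ≠ 0) :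
    ∫ x in a..b, (c + d * x) * Real.cos (k * x)
    = ((c + d * b) * Real.sin (k * b) / k + d * Real.cos (k * b) / k ^ 2)
      - ((c + d * a) * Real.sin (k * a) / k + d * Real.cos (k * a) / k ^ 2) := by
  apply intervalIntegral.integral_eq_sub_of_hasDerivAt
  · intro x _
    have h1 : HasDerivAt (fun x : ℝ => k * x) k x := by
      simpa using (hasDerivAt_id x).const_mul k
    have hsin : HasDerivAt (fun x : ℝ => Real.sin (k * x)) (Real.cos (k * x) * k) x :=
      (Real.hasDerivAt_sin (k * x)).comp x h1
    have hcos : HasDerivAt (fun x : ℝ => Real.cos (k * x)) (-Real.sin (k * x) * k) x :=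
      (Real.hasDerivAt_cos (k * x)).comp x h1
    have hlin : HasDerivAt (fun x : ℝ => c + d * x) d x := by
      have h := ((hasDerivAt_id' x).const_mul d).const_add c
      rwa [mul_one] at h
    have := ((hlin.mul hsin).div_const k).add ((hcos.const_mul d).div_const (k ^ 2))
    convert this using 1
    · funext y; simp only [Pi.add_apply, Pi.mul_apply]
    · field_simp; ring
  · exact (Continuous.mul (by continuity) (by continuity)).intervalIntegrable a b

theorem stmt_18 (S A : ℝ) (hS : 0 < S) (hSA : S ≤ A) (hA : A ≤ 1 - S)
    (f : ℝ → ℝ) (hf : ∀ x : ℝ, f x = (1 / S ^ 2) * max (S - |(|x| - A)|) 0) :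
    ∀ n : ℕ, 0 < n →
      (∫ x in (-1:ℝ)..1, f x * Real.cos (n * π * x))
        = 2 * Real.cos (n * π * A)
            * (Real.sin (n * π * S / 2) / (n * π * S / 2)) ^ 2 := by
  have hf' : f = fun x => (1 / S ^ 2) * max (S - |(|x| - A)|) 0 := funext hf
  subst hf'
  intro n hn
  set k : ℝ := n * π with hkdef
  have hk : k ≠ 0 := by
    have : (0:ℝ) < n := by exact_mod_cast hn
    positivity
  have hS' : S ≠ 0 := ne_of_gt hS
  have hcf : Continuous fun x : ℝ => (1 / S ^ 2) * max (S - |(|x| - A)|) 0 * Real.cos (k * x) := by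
    continuity
  have hInt : ∀ a b : ℝ, IntervalIntegrable
      (fun x : ℝ => (1 / S ^ 2) * max (S - |(|x| - A)|) 0 * Real.cos (k * x)) volume a b :=
    fun a b => hcf.intervalIntegrable a b
  -- even symmetry
  have heven : (∫ x in (-1:ℝ)..0, (1 / S ^ 2) * max (S - |(|x| - A)|) 0 * Real.cos (k * x))
      = ∫ x in (0:ℝ)..1, (1 / S ^ 2) * max (S - |(|x| - A)|) 0 * Real.cos (k * x) := by
    have h := intervalIntegral.integral_comp_neg (a := (0:ℝ)) (b := (1:ℝ))
      (fun x : ℝ => (1 / S ^ 2) * max (S - |(|x| - A)|) 0 * Real.cos (k * x))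
    simp only [neg_zero] at h
    rw [← h]
    apply intervalIntegral.integral_congr
    intro x hx
    dsimp only
    simp [abs_neg, mul_neg]
  have hsplit : (∫ x in (-1:ℝ)..1, (1 / S ^ 2) * max (S - |(|x| - A)|) 0 * Real.cos (k * x))
      = 2 * ∫ x in (0:ℝ)..1, (1 / S ^ 2) * max (S - |(|x| - A)|) 0 * Real.cos (k * x) := by
    rw [← intervalIntegral.integral_add_adjacent_intervals (hInt (-1) 0) (hInt 0 1), heven]
    ring
  rw [hsplit]
  -- bounds
  have h0AS : (0:ℝ) ≤ A - S := by linarith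
  have hAS1 : A + S ≤ 1 := by linarith
  -- split [0,1]
  have hsplit2 : (∫ x in (0:ℝ)..1, (1 / S ^ 2) * max (S - |(|x| - A)|) 0 * Real.cos (k * x))
      = (∫ x in (0:ℝ)..(A - S), (1 / S ^ 2) * max (S - |(|x| - A)|) 0 * Real.cos (k * x))
      + (∫ x in (A - S)..A, (1 / S ^ 2) * max (S - |(|x| - A)|) 0 * Real.cos (k * x))
      + (∫ x in A..(A + S), (1 / S ^ 2) * max (S - |(|x| - A)|) 0 * Real.cos (k * x))
      + (∫ x in (A + S)..(1:ℝ), (1 / S ^ 2) * max (S - |(|x| - A)|) 0 * Real.cos (k * x)) := by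
    rw [← intervalIntegral.integral_add_adjacent_intervals (hInt 0 (A - S)) (hInt (A - S) 1),
      ← intervalIntegral.integral_add_adjacent_intervals (hInt (A - S) A) (hInt A 1),
      ← intervalIntegral.integral_add_adjacent_intervals (hInt A (A + S)) (hInt (A + S) 1)]
    ring
  have hz1 : (∫ x in (0:ℝ)..(A - S), (1 / S ^ 2) * max (S - |(|x| - A)|) 0 * Real.cos (k * x)) = 0 := by
    rw [intervalIntegral.integral_congr (g := fun _ => (0:ℝ))]
    · simp
    · intro x hx
      rw [Set.uIcc_of_le h0AS] at hx
      have h1 : |x| = x := abs_of_nonneg hx.1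
      have h2 : |(|x| - A)| = A - x := by rw [h1, abs_of_nonpos (by linarith [hx.2])]; ring
      have heq : max (S - |(|x| - A)|) 0 = 0 := max_eq_right (by rw [h2]; linarith [hx.2])
      dsimp only
      rw [heq]; ring
  have hz2 : (∫ x in (A + S)..(1:ℝ), (1 / S ^ 2) * max (S - |(|x| - A)|) 0 * Real.cos (k * x)) = 0 := by
    rw [intervalIntegral.integral_congr (g := fun _ => (0:ℝ))]
    · simp
    · intro x hx
      rw [Set.uIcc_of_le hAS1] at hx
      have h1 : |x| = x := abs_of_nonneg (by linarith [hx.1, hS.le])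
      have h2 : |(|x| - A)| = x - A := by rw [h1, abs_of_nonneg (by linarith [hx.1])]
      have heq : max (S - |(|x| - A)|) 0 = 0 := max_eq_right (by rw [h2]; linarith [hx.1])
      dsimp only
      rw [heq]; ring
  have hm1 : (∫ x in (A - S)..A, (1 / S ^ 2) * max (S - |(|x| - A)|) 0 * Real.cos (k * x))
      = (1 / S ^ 2) * ∫ x in (A - S)..A, ((S - A) + 1 * x) * Real.cos (k * x) := by
    rw [← intervalIntegral.integral_const_mul]
    apply intervalIntegral.integral_congr
    intro x hx
    dsimp only
    rw [Set.uIcc_of_le (by linarith : A - S ≤ A)] at hx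
    have h1 : |x| = x := abs_of_nonneg (by linarith [hx.1])
    have h2 : |(|x| - A)| = A - x := by rw [h1, abs_of_nonpos (by linarith [hx.2])]; ring
    have : max (S - |(|x| - A)|) 0 = (S - A) + 1 * x := by
      rw [h2, max_eq_left (by linarith [hx.1])]; ring
    rw [this]; ring
  have hm2 : (∫ x in A..(A + S), (1 / S ^ 2) * max (S - |(|x| - A)|) 0 * Real.cos (k * x))
      = (1 / S ^ 2) * ∫ x in A..(A + S), ((S + A) + (-1) * x) * Real.cos (k * x) := by
    rw [← intervalIntegral.integral_const_mul]
    apply intervalIntegral.integral_congr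
    intro x hx
    dsimp only
    rw [Set.uIcc_of_le (by linarith : A ≤ A + S)] at hx
    have h1 : |x| = x := abs_of_nonneg (by linarith [hx.1, hS.le])
    have h2 : |(|x| - A)| = x - A := by rw [h1, abs_of_nonneg (by linarith [hx.1])]
    have : max (S - |(|x| - A)|) 0 = (S + A) + (-1) * x := by
      rw [h2, max_eq_left (by linarith [hx.2])]; ring
    rw [this]; ring
  rw [hsplit2, hz1, hz2, hm1, hm2, lin_cos k (S - A) 1 (A - S) A hk,
    lin_cos k (S + A) (-1) A (A + S) hk]
  have e1 : k * (A - S) = k * A - k * S := by ring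
  have e2 : k * (A + S) = k * A + k * S := by ring
  rw [e1, e2, Real.cos_sub, Real.cos_add, Real.sin_sub, Real.sin_add]
  have hhalf : Real.cos (k * S) = 1 - 2 * Real.sin (k * S / 2) ^ 2 := by
    have h2 := Real.sin_sq_add_cos_sq (k * S / 2)
    have h3 := Real.cos_two_mul (k * S / 2)
    rw [show 2 * (k * S / 2) = k * S by ring] at h3
    linarith
  have hRHS : (Real.sin (n * π * S / 2) / (n * π * S / 2)) ^ 2
      = Real.sin (k * S / 2) ^ 2 / (k * S / 2) ^ 2 := by
    rw [div_pow]
  rw [hRHS, hhalf]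
  field_simp
  ring
end
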